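/- Let s ∈ 𝕆 satisfy η(s) = s s̄ = 2. Then Wilson's generating map (iv), (x, y, z) ↦ ½( (y+z)s, x s̄ − y + z, x s̄ + y − z ), preserves the norm N on 𝕆³: N( ½(y+z)s, ½(x s̄ − y + z), ½(x s̄ + y − z) ) = N(x, y, z) for all x, y, z ∈ 𝕆. -/
import Mathlib


/-!
Octonions 𝕆: 8-dimensional real composition division algebra with orthonormal
basis {e₀ = 1, e₁, …, e₇}, multiplication determined by e₁e₂ = e₄ together with
its images under the index maps e_t ↦ e_{t+1} and e_t ↦ e_{2t}, conjugation
x ↦ x̄, and norm η(x) = x x̄.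
-/

noncomputable section

namespace LeechPaper

/-- The octonions, as 8-tuples of real coordinates over the basis
`{e₀ = 1, e₁, …, e₇}`. -/
structure Oct where
  c : Fin 8 → ℝ

namespace Oct

def equivFun : Oct ≃ (Fin 8 → ℝ) where
  toFun := Oct.c
  invFun := Oct.mk
  left_inv _ := rfl
  right_inv _ := rfl

instance : AddCommGroup Oct := equivFun.addCommGroup

instance : SMul ℝ Oct := ⟨fun r x => ⟨fun k => r * x.c k⟩⟩

/-- The basis octonions `e t`, `t ∈ PL(7) = {∞} ∪ 𝔽₇` (labelled here by `Fin 8`,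
with `e 0 = 1` the real unit and `e 1, …, e 7` the imaginary units). -/
def e (t : Fin 8) : Oct := ⟨fun k => if k = t then 1 else 0⟩

instance : One Oct := ⟨e 0⟩

/-- Index part of the structure constants: `e i * e j = ± e (octIdxTbl i j)`.
The table encodes `e₁e₂ = e₄` together with all its images under the index maps
`e_t ↦ e_{t+1}` and `e_t ↦ e_{2t}` (imaginary indices taken mod 7), i.e. the
Fano lines `(1,2,4), (2,3,5), (3,4,6), (4,5,7), (5,6,1), (6,7,2), (7,1,3)`. -/
def octIdxTbl : Matrix (Fin 8) (Fin 8) (Fin 8) :=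
  !![0, 1, 2, 3, 4, 5, 6, 7;
     1, 0, 4, 7, 2, 6, 5, 3;
     2, 4, 0, 5, 1, 3, 7, 6;
     3, 7, 5, 0, 6, 2, 4, 1;
     4, 2, 1, 6, 0, 7, 3, 5;
     5, 6, 3, 2, 7, 0, 1, 4;
     6, 5, 7, 4, 3, 1, 0, 2;
     7, 3, 6, 1, 5, 4, 2, 0]

/-- Sign part of the structure constants: `e i * e j = octSgnTbl i j • e (octIdxTbl i j)`. -/
def octSgnTbl : Matrix (Fin 8) (Fin 8) ℝ :=
  !![1, 1, 1, 1, 1, 1, 1, 1;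
     1, -1, 1, 1, -1, 1, -1, -1;
     1, -1, -1, 1, 1, -1, 1, -1;
     1, -1, -1, -1, 1, 1, -1, 1;
     1, 1, -1, -1, -1, 1, 1, -1;
     1, -1, 1, -1, -1, -1, 1, 1;
     1, 1, -1, 1, -1, -1, -1, 1;
     1, 1, 1, -1, 1, -1, -1, -1]

/-- Octonion multiplication, bilinear with structure constants given by the tables. -/
instance : Mul Oct :=
  ⟨fun x y => ⟨fun k => ∑ i : Fin 8, ∑ j : Fin 8,
    (if octIdxTbl i j = k then octSgnTbl i j else 0) * x.c i * y.c j⟩⟩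

/-- Octonion conjugation `x ↦ x̄` (negate the imaginary coordinates). -/
def conj (x : Oct) : Oct := ⟨fun k => if k = 0 then x.c 0 else -x.c k⟩

/-- The real part of an octonion. -/
def re (x : Oct) : ℝ := x.c 0

/-- The norm `η(x) = x x̄` (which is a real octonion; we record its real value). -/
def eta (x : Oct) : ℝ := re (x * conj x)

end Oct

open Oct

/-- The norm `N(x,y,z) = ½(x x̄ + y ȳ + z z̄)` on `𝕆³`. -/
def N (x y z : Oct) : ℝ := (eta x + eta y + eta z) / 2

/-- The conjugate transpose of a `3 × 3` octonionic matrix. -/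
def ctrans (M : Matrix (Fin 3) (Fin 3) Oct) : Matrix (Fin 3) (Fin 3) Oct :=
  fun i j => conj (M j i)

/-- The matrix `V = v̄ vᵀ ∈ J₃^𝕆` with `(i,j)` entry `v̄ᵢ vⱼ`, for `v ∈ 𝕆³`. -/
def jmat (v : Fin 3 → Oct) : Matrix (Fin 3) (Fin 3) Oct :=
  fun i j => conj (v i) * v j

/-- The (real) trace of a Hermitian `3 × 3` octonionic matrix. -/
def rtr (J : Matrix (Fin 3) (Fin 3) Oct) : ℝ :=
  re (J 0 0) + re (J 1 1) + re (J 2 2)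

/-- The cubic norm (determinant) of a Hermitian `3 × 3` octonionic matrix
`J = [[r₁, A₁, Ā₂],[Ā₁, r₂, A₃],[A₂, Ā₃, r₃]]`:
`det J = r₁r₂r₃ − r₁ η(A₃) − r₂ η(A₂) − r₃ η(A₁) + 2 Re((A₁A₃)A₂)`. -/
def jdet (J : Matrix (Fin 3) (Fin 3) Oct) : ℝ :=
  re (J 0 0) * re (J 1 1) * re (J 2 2)
    - re (J 0 0) * eta (J 1 2) - re (J 1 1) * eta (J 2 0) - re (J 2 2) * eta (J 0 1)
    + 2 * re ((J 0 1 * J 1 2) * J 2 0)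

/-- The quadratic adjoint `J♮ = J² − tr(J)·J + ½(tr(J)² − tr(J²))·I` of a Hermitian
`3 × 3` octonionic matrix. -/
def jadj (J : Matrix (Fin 3) (Fin 3) Oct) : Matrix (Fin 3) (Fin 3) Oct :=
  J * J - rtr J • J + (((rtr J) ^ 2 - rtr (J * J)) / 2) • (1 : Matrix (Fin 3) (Fin 3) Oct)

/-- The 240 root octonions: the 112 octonions `±e_t ± e_u` for distinct
`t, u ∈ PL(7)` together with the 128 octonions `½(±1 ± e₁ ± ⋯ ± e₇)` having an
odd number of minus signs. Their ℤ-span `L` is a scaled copy of the E₈ lattice. -/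
def Roots : Set Oct :=
  {x | ∃ t u : Fin 8, t ≠ u ∧ ∃ a b : ℝ, (a = 1 ∨ a = -1) ∧ (b = 1 ∨ b = -1) ∧
        x = a • e t + b • e u} ∪
  {x | ∃ ε : Fin 8 → ℝ, (∀ i, ε i = 1 ∨ ε i = -1) ∧
        Odd (Finset.univ.filter fun i => ε i = -1).card ∧
        x = (1/2 : ℝ) • ∑ i : Fin 8, ε i • e i}

/-- The lattice `L`, a scaled copy of the E₈ root lattice inside 𝕆. -/
def L : Submodule ℤ Oct := Submodule.span ℤ Roots

end LeechPaper

end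

namespace LeechPaper
open Oct

namespace Oct

lemma c_mul (x y : Oct) (k : Fin 8) : (x * y).c k = ∑ i : Fin 8, ∑ j : Fin 8,
    (if octIdxTbl i j = k then octSgnTbl i j else 0) * x.c i * y.c j := rfl
lemma c_add (x y : Oct) (k : Fin 8) : (x + y).c k = x.c k + y.c k := rfl
lemma c_sub (x y : Oct) (k : Fin 8) : (x - y).c k = x.c k - y.c k := rfl
lemma c_smul (r : ℝ) (x : Oct) (k : Fin 8) : (r • x).c k = r * x.c k := rfl

lemma mulc0 (x y : Oct) : (x*y).c 0 = x.c 0 * y.c 0 - x.c 1 * y.c 1 - x.c 2 * y.c 2 - x.c 3 * y.c 3 - x.c 4 * y.c 4 - x.c 5 * y.c 5 - x.c 6 * y.c 6 - x.c 7 * y.c 7 := by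
  rw [c_mul]
  simp (config := { decide := true }) only [Fin.sum_univ_succ, Fin.sum_univ_zero, octIdxTbl,
    octSgnTbl, Matrix.cons_val_zero, Matrix.cons_val_succ, Matrix.of_apply, Fin.succ_zero_eq_one, if_true, if_false, ite_true, ite_false,
    Matrix.cons_val', Matrix.cons_val_one, Matrix.head_cons, Matrix.head_fin_const,
    Matrix.empty_val', Matrix.cons_val_fin_one]
  simp only [show ((1 : Fin 7).succ : Fin 8) = 2 from rfl, show ((1 : Fin 6).succ.succ : Fin 8) = 3 from rfl, show ((1 : Fin 5).succ.succ.succ : Fin 8) = 4 from rfl, show ((1 : Fin 4).succ.succ.succ.succ : Fin 8) = 5 from rfl, show ((1 : Fin 3).succ.succ.succ.succ.succ : Fin 8) = 6 from rfl, show ((1 : Fin 2).succ.succ.succ.succ.succ.succ : Fin 8) = 7 from rfl]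
  ring

lemma mulc1 (x y : Oct) : (x*y).c 1 = x.c 0 * y.c 1 + x.c 1 * y.c 0 + x.c 2 * y.c 4 + x.c 3 * y.c 7 - x.c 4 * y.c 2 + x.c 5 * y.c 6 - x.c 6 * y.c 5 - x.c 7 * y.c 3 := by
  rw [c_mul]
  simp (config := { decide := true }) only [Fin.sum_univ_succ, Fin.sum_univ_zero, octIdxTbl,
    octSgnTbl, Matrix.cons_val_zero, Matrix.cons_val_succ, Matrix.of_apply, Fin.succ_zero_eq_one, if_true, if_false, ite_true, ite_false,
    Matrix.cons_val', Matrix.cons_val_one, Matrix.head_cons, Matrix.head_fin_const,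
    Matrix.empty_val', Matrix.cons_val_fin_one]
  simp only [show ((1 : Fin 7).succ : Fin 8) = 2 from rfl, show ((1 : Fin 6).succ.succ : Fin 8) = 3 from rfl, show ((1 : Fin 5).succ.succ.succ : Fin 8) = 4 from rfl, show ((1 : Fin 4).succ.succ.succ.succ : Fin 8) = 5 from rfl, show ((1 : Fin 3).succ.succ.succ.succ.succ : Fin 8) = 6 from rfl, show ((1 : Fin 2).succ.succ.succ.succ.succ.succ : Fin 8) = 7 from rfl]
  ring

lemma mulc2 (x y : Oct) : (x*y).c 2 = x.c 0 * y.c 2 - x.c 1 * y.c 4 + x.c 2 * y.c 0 + x.c 3 * y.c 5 + x.c 4 * y.c 1 - x.c 5 * y.c 3 + x.c 6 * y.c 7 - x.c 7 * y.c 6 := by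
  rw [c_mul]
  simp (config := { decide := true }) only [Fin.sum_univ_succ, Fin.sum_univ_zero, octIdxTbl,
    octSgnTbl, Matrix.cons_val_zero, Matrix.cons_val_succ, Matrix.of_apply, Fin.succ_zero_eq_one, if_true, if_false, ite_true, ite_false,
    Matrix.cons_val', Matrix.cons_val_one, Matrix.head_cons, Matrix.head_fin_const,
    Matrix.empty_val', Matrix.cons_val_fin_one]
  simp only [show ((1 : Fin 7).succ : Fin 8) = 2 from rfl, show ((1 : Fin 6).succ.succ : Fin 8) = 3 from rfl, show ((1 : Fin 5).succ.succ.succ : Fin 8) = 4 from rfl, show ((1 : Fin 4).succ.succ.succ.succ : Fin 8) = 5 from rfl, show ((1 : Fin 3).succ.succ.succ.succ.succ : Fin 8) = 6 from rfl, show ((1 : Fin 2).succ.succ.succ.succ.succ.succ : Fin 8) = 7 from rfl]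
  ring

lemma mulc3 (x y : Oct) : (x*y).c 3 = x.c 0 * y.c 3 - x.c 1 * y.c 7 - x.c 2 * y.c 5 + x.c 3 * y.c 0 + x.c 4 * y.c 6 + x.c 5 * y.c 2 - x.c 6 * y.c 4 + x.c 7 * y.c 1 := by
  rw [c_mul]
  simp (config := { decide := true }) only [Fin.sum_univ_succ, Fin.sum_univ_zero, octIdxTbl,
    octSgnTbl, Matrix.cons_val_zero, Matrix.cons_val_succ, Matrix.of_apply, Fin.succ_zero_eq_one, if_true, if_false, ite_true, ite_false,
    Matrix.cons_val', Matrix.cons_val_one, Matrix.head_cons, Matrix.head_fin_const,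
    Matrix.empty_val', Matrix.cons_val_fin_one]
  simp only [show ((1 : Fin 7).succ : Fin 8) = 2 from rfl, show ((1 : Fin 6).succ.succ : Fin 8) = 3 from rfl, show ((1 : Fin 5).succ.succ.succ : Fin 8) = 4 from rfl, show ((1 : Fin 4).succ.succ.succ.succ : Fin 8) = 5 from rfl, show ((1 : Fin 3).succ.succ.succ.succ.succ : Fin 8) = 6 from rfl, show ((1 : Fin 2).succ.succ.succ.succ.succ.succ : Fin 8) = 7 from rfl]
  ring

lemma mulc4 (x y : Oct) : (x*y).c 4 = x.c 0 * y.c 4 + x.c 1 * y.c 2 - x.c 2 * y.c 1 - x.c 3 * y.c 6 + x.c 4 * y.c 0 + x.c 5 * y.c 7 + x.c 6 * y.c 3 - x.c 7 * y.c 5 := by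
  rw [c_mul]
  simp (config := { decide := true }) only [Fin.sum_univ_succ, Fin.sum_univ_zero, octIdxTbl,
    octSgnTbl, Matrix.cons_val_zero, Matrix.cons_val_succ, Matrix.of_apply, Fin.succ_zero_eq_one, if_true, if_false, ite_true, ite_false,
    Matrix.cons_val', Matrix.cons_val_one, Matrix.head_cons, Matrix.head_fin_const,
    Matrix.empty_val', Matrix.cons_val_fin_one]
  simp only [show ((1 : Fin 7).succ : Fin 8) = 2 from rfl, show ((1 : Fin 6).succ.succ : Fin 8) = 3 from rfl, show ((1 : Fin 5).succ.succ.succ : Fin 8) = 4 from rfl, show ((1 : Fin 4).succ.succ.succ.succ : Fin 8) = 5 from rfl, show ((1 : Fin 3).succ.succ.succ.succ.succ : Fin 8) = 6 from rfl, show ((1 : Fin 2).succ.succ.succ.succ.succ.succ : Fin 8) = 7 from rfl]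
  ring

lemma mulc5 (x y : Oct) : (x*y).c 5 = x.c 0 * y.c 5 - x.c 1 * y.c 6 + x.c 2 * y.c 3 - x.c 3 * y.c 2 - x.c 4 * y.c 7 + x.c 5 * y.c 0 + x.c 6 * y.c 1 + x.c 7 * y.c 4 := by
  rw [c_mul]
  simp (config := { decide := true }) only [Fin.sum_univ_succ, Fin.sum_univ_zero, octIdxTbl,
    octSgnTbl, Matrix.cons_val_zero, Matrix.cons_val_succ, Matrix.of_apply, Fin.succ_zero_eq_one, if_true, if_false, ite_true, ite_false,
    Matrix.cons_val', Matrix.cons_val_one, Matrix.head_cons, Matrix.head_fin_const,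
    Matrix.empty_val', Matrix.cons_val_fin_one]
  simp only [show ((1 : Fin 7).succ : Fin 8) = 2 from rfl, show ((1 : Fin 6).succ.succ : Fin 8) = 3 from rfl, show ((1 : Fin 5).succ.succ.succ : Fin 8) = 4 from rfl, show ((1 : Fin 4).succ.succ.succ.succ : Fin 8) = 5 from rfl, show ((1 : Fin 3).succ.succ.succ.succ.succ : Fin 8) = 6 from rfl, show ((1 : Fin 2).succ.succ.succ.succ.succ.succ : Fin 8) = 7 from rfl]
  ring

lemma mulc6 (x y : Oct) : (x*y).c 6 = x.c 0 * y.c 6 + x.c 1 * y.c 5 - x.c 2 * y.c 7 + x.c 3 * y.c 4 - x.c 4 * y.c 3 - x.c 5 * y.c 1 + x.c 6 * y.c 0 + x.c 7 * y.c 2 := by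
  rw [c_mul]
  simp (config := { decide := true }) only [Fin.sum_univ_succ, Fin.sum_univ_zero, octIdxTbl,
    octSgnTbl, Matrix.cons_val_zero, Matrix.cons_val_succ, Matrix.of_apply, Fin.succ_zero_eq_one, if_true, if_false, ite_true, ite_false,
    Matrix.cons_val', Matrix.cons_val_one, Matrix.head_cons, Matrix.head_fin_const,
    Matrix.empty_val', Matrix.cons_val_fin_one]
  simp only [show ((1 : Fin 7).succ : Fin 8) = 2 from rfl, show ((1 : Fin 6).succ.succ : Fin 8) = 3 from rfl, show ((1 : Fin 5).succ.succ.succ : Fin 8) = 4 from rfl, show ((1 : Fin 4).succ.succ.succ.succ : Fin 8) = 5 from rfl, show ((1 : Fin 3).succ.succ.succ.succ.succ : Fin 8) = 6 from rfl, show ((1 : Fin 2).succ.succ.succ.succ.succ.succ : Fin 8) = 7 from rfl]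
  ring

lemma mulc7 (x y : Oct) : (x*y).c 7 = x.c 0 * y.c 7 + x.c 1 * y.c 3 + x.c 2 * y.c 6 - x.c 3 * y.c 1 + x.c 4 * y.c 5 - x.c 5 * y.c 4 - x.c 6 * y.c 2 + x.c 7 * y.c 0 := by
  rw [c_mul]
  simp (config := { decide := true }) only [Fin.sum_univ_succ, Fin.sum_univ_zero, octIdxTbl,
    octSgnTbl, Matrix.cons_val_zero, Matrix.cons_val_succ, Matrix.of_apply, Fin.succ_zero_eq_one, if_true, if_false, ite_true, ite_false,
    Matrix.cons_val', Matrix.cons_val_one, Matrix.head_cons, Matrix.head_fin_const,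
    Matrix.empty_val', Matrix.cons_val_fin_one]
  simp only [show ((1 : Fin 7).succ : Fin 8) = 2 from rfl, show ((1 : Fin 6).succ.succ : Fin 8) = 3 from rfl, show ((1 : Fin 5).succ.succ.succ : Fin 8) = 4 from rfl, show ((1 : Fin 4).succ.succ.succ.succ : Fin 8) = 5 from rfl, show ((1 : Fin 3).succ.succ.succ.succ.succ : Fin 8) = 6 from rfl, show ((1 : Fin 2).succ.succ.succ.succ.succ.succ : Fin 8) = 7 from rfl]
  ring

lemma conjc0 (x : Oct) : (conj x).c 0 = x.c 0 := rfl
lemma conjc1 (x : Oct) : (conj x).c 1 = -x.c 1 := rfl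
lemma conjc2 (x : Oct) : (conj x).c 2 = -x.c 2 := rfl
lemma conjc3 (x : Oct) : (conj x).c 3 = -x.c 3 := rfl
lemma conjc4 (x : Oct) : (conj x).c 4 = -x.c 4 := rfl
lemma conjc5 (x : Oct) : (conj x).c 5 = -x.c 5 := rfl
lemma conjc6 (x : Oct) : (conj x).c 6 = -x.c 6 := rfl
lemma conjc7 (x : Oct) : (conj x).c 7 = -x.c 7 := rfl

lemma eta_expand (x : Oct) : eta x = x.c 0^2 + x.c 1^2 + x.c 2^2 + x.c 3^2 + x.c 4^2
    + x.c 5^2 + x.c 6^2 + x.c 7^2 := by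
  show (x * conj x).c 0 = _
  rw [mulc0, conjc0, conjc1, conjc2, conjc3, conjc4, conjc5, conjc6, conjc7]
  ring

set_option maxHeartbeats 4000000 in
lemma eta_mul (x y : Oct) : eta (x * y) = eta x * eta y := by
  rw [eta_expand, eta_expand, eta_expand, mulc0, mulc1, mulc2, mulc3, mulc4, mulc5, mulc6, mulc7]
  ring

lemma eta_smul (r : ℝ) (a : Oct) : eta (r • a) = r^2 * eta a := by
  rw [eta_expand, eta_expand]; simp only [c_smul]; ring

lemma eta_par (a b : Oct) : eta (a + b) + eta (a - b) = 2 * eta a + 2 * eta b := by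
  rw [eta_expand a, eta_expand b, eta_expand (a+b), eta_expand (a-b)]
  simp only [c_add, c_sub]; ring

lemma eta_conj (a : Oct) : eta (conj a) = eta a := by
  rw [eta_expand, eta_expand, conjc0, conjc1, conjc2, conjc3, conjc4, conjc5, conjc6, conjc7]
  ring

end Oct

/-- Let `s ∈ 𝕆` satisfy `η(s) = s s̄ = 2`. Then Wilson's generating map (iv),
`(x, y, z) ↦ ½((y+z)s, x s̄ − y + z, x s̄ + y − z)`, preserves the norm `N` on `𝕆³`. -/
theorem wilson_map_iv_norm_preserving
    (s : Oct) (hs : s * conj s = (2 : ℝ) • (1 : Oct)) (hs' : eta s = 2) :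
    ∀ x y z : Oct,
      N ((1/2 : ℝ) • ((y + z) * s))
        ((1/2 : ℝ) • (x * conj s - y + z))
        ((1/2 : ℝ) • (x * conj s + y - z)) = N x y z := by
  intro x y z
  have h1 : x * conj s - y + z = x * conj s - (y - z) := by abel
  have h2 : x * conj s + y - z = x * conj s + (y - z) := by abel
  have hp := eta_par (x * conj s) (y - z)
  have hq := eta_par y z
  have hu : eta (x * conj s) = eta x * eta (conj s) := eta_mul x (conj s)
  have hc : eta (conj s) = eta s := eta_conj s
  have hm : eta ((y + z) * s) = eta (y + z) * eta s := eta_mul (y + z) s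
  rw [N, N, h1, h2, eta_smul, eta_smul, eta_smul, hm, hs'] at *
  rw [hc, hs'] at hu
  nlinarith [hp, hq, hu]

end LeechPaper
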